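/- Let S be a semigroup with an injective sequence (sₙ) admitting subsequences (xₖ), (yₗ) with {xₖ yₗ : k < l} ∩ {xₖ yₗ : k > l} = ∅, and let ω be a weight on S with ε ≤ ω and ω(sₙ) ≤ n₀ for all n. If Ω is 0-cluster, this yields a contradiction; hence no such configuration exists when Ω is 0-cluster. -/

import Mathlib

open Filter Function

def IterLim (F : ℕ → ℕ → ℝ) (L : ℝ) : Prop :=
  ∃ g : ℕ → ℝ, (∀ n, Tendsto (fun m => F n m) atTop (nhds (g n))) ∧
    Tendsto g atTop (nhds L)

def ZeroCluster {S : Type*} (Om : S → S → ℝ) : Prop :=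
  ∀ x y : ℕ → S, Injective x → Injective y → ∀ L₁ L₂ : ℝ,
    IterLim (fun n m => Om (x n) (y m)) L₁ →
    IterLim (fun m n => Om (x n) (y m)) L₂ →
    L₁ = 0 ∧ L₂ = 0

def IsWeight {S : Type*} [Mul S] (ω : S → ℝ) : Prop :=
  (∀ s, 0 < ω s) ∧ ∀ s t, ω (s * t) ≤ ω s * ω t

/-!
On the grid `(s (n k), s (m l))` the weight ratio `Ω` is pinched between `ε / n₀²` and `1`.
A diagonal extraction in the compact interval `[ε / n₀², 1]` produces subsequences along
which both iterated limits of `Ω` exist; they lie in that interval, so neither is `0`.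
-/

open Topology

lemma exists_strictMono_forall_tendsto {K : Set ℝ} (hK : IsCompact K) {F : ℕ → ℕ → ℝ}
    (hF : ∀ k l, F k l ∈ K) :
    ∃ ψ : ℕ → ℕ, StrictMono ψ ∧ ∃ g : ℕ → ℝ, (∀ k, g k ∈ K) ∧
      ∀ k, Tendsto (fun l => F k (ψ l)) atTop (𝓝 (g k)) := by
  obtain ⟨g, hg, ψ, hψ, hlim⟩ := (isCompact_univ_pi fun _ : ℕ => hK).tendsto_subseq
    (x := fun l k => F k l) fun l k _ => hF k l
  exact ⟨ψ, hψ, g, fun k => hg k (Set.mem_univ k), tendsto_pi_nhds.mp hlim⟩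

lemma exists_strictMono_iterLim {K : Set ℝ} (hK : IsCompact K) {F : ℕ → ℕ → ℝ}
    (hF : ∀ k l, F k l ∈ K) :
    ∃ φ ψ : ℕ → ℕ, StrictMono φ ∧ StrictMono ψ ∧ ∃ L₁ ∈ K, ∃ L₂ ∈ K,
      IterLim (fun k l => F (φ k) (ψ l)) L₁ ∧ IterLim (fun l k => F (φ k) (ψ l)) L₂ := by
  obtain ⟨ψ₁, hψ₁, g, hgK, hg⟩ := exists_strictMono_forall_tendsto hK hF
  obtain ⟨φ₁, hφ₁, h, hhK, hh⟩ :=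
    exists_strictMono_forall_tendsto hK (F := fun l k => F k (ψ₁ l)) fun l k => hF k (ψ₁ l)
  obtain ⟨L₁, hL₁K, φ₂, hφ₂, hL₁⟩ := hK.tendsto_subseq fun k => hgK (φ₁ k)
  obtain ⟨L₂, hL₂K, ψ₂, hψ₂, hL₂⟩ := hK.tendsto_subseq hhK
  refine ⟨φ₁ ∘ φ₂, ψ₁ ∘ ψ₂, hφ₁.comp hφ₂, hψ₁.comp hψ₂, L₁, hL₁K, L₂, hL₂K,
    ⟨fun k => g (φ₁ (φ₂ k)), fun k => ?_, hL₁⟩, ⟨fun l => h (ψ₂ l), fun l => ?_, hL₂⟩⟩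
  · exact (hg _).comp hψ₂.tendsto_atTop
  · exact (hh _).comp hφ₂.tendsto_atTop

theorem not_zeroCluster_of_mem_Icc {S : Type*} {Om : S → S → ℝ} {x y : ℕ → S}
    (hx : Injective x) (hy : Injective y) {c C : ℝ} (hc : 0 < c)
    (hOm : ∀ k l, Om (x k) (y l) ∈ Set.Icc c C) : ¬ ZeroCluster Om := by
  intro hZC
  obtain ⟨φ, ψ, hφ, hψ, L₁, hL₁, L₂, -, hlim₁, hlim₂⟩ := exists_strictMono_iterLim isCompact_Icc hOm
  have hL₁_zero := (hZC (x ∘ φ) (y ∘ ψ) (hx.comp hφ.injective) (hy.comp hψ.injective)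
    L₁ L₂ hlim₁ hlim₂).1
  linarith [hL₁.1]

lemma IsWeight.div_mul_mem_Icc {S : Type*} [Mul S] {ω : S → ℝ} (hω : IsWeight ω)
    {ε n₀ : ℝ} {a b : S} (hε : ε ≤ ω (a * b)) (ha : ω a ≤ n₀) (hb : ω b ≤ n₀) :
    ω (a * b) / (ω a * ω b) ∈ Set.Icc (ε / (n₀ * n₀)) 1 := by
  have hab : 0 < ω a * ω b := mul_pos (hω.1 a) (hω.1 b)
  refine ⟨div_le_div₀ (hω.1 _).le hε hab ?_, (div_le_one hab).mpr (hω.2 a b)⟩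
  exact mul_le_mul ha hb (hω.1 b).le ((hω.1 a).le.trans ha)

theorem triangle_disjoint_not_zeroCluster_general {S : Type*} [Semigroup S]
    (s : ℕ → S) (hs : Injective s)
    (n m : ℕ → ℕ) (hn : StrictMono n) (hm : StrictMono m)
    (ω : S → ℝ) (hω : IsWeight ω) (ε : ℝ) (hε : 0 < ε) (hbdd : ∀ x, ε ≤ ω x)
    (n₀ : ℝ) (hn₀ : ∀ k, ω (s k) ≤ n₀) :
    ¬ ZeroCluster (fun a b : S => ω (a * b) / (ω a * ω b)) := by
  have hn₀_pos : 0 < n₀ := hε.trans_le ((hbdd (s 0)).trans (hn₀ 0))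
  exact not_zeroCluster_of_mem_Icc (x := s ∘ n) (y := s ∘ m)
    (hs.comp hn.injective) (hs.comp hm.injective) (by positivity)
    fun k l => hω.div_mul_mem_Icc (hbdd _) (hn₀ _) (hn₀ _)

theorem triangle_disjoint_not_zeroCluster {S : Type*} [Semigroup S]
    (s : ℕ → S) (hs : Injective s)
    (n m : ℕ → ℕ) (hn : StrictMono n) (hm : StrictMono m)
    (hdisj : {z : S | ∃ k l, k < l ∧ s (n k) * s (m l) = z} ∩
        {z : S | ∃ k l, l < k ∧ s (n k) * s (m l) = z} = ∅)
    (ω : S → ℝ) (hω : IsWeight ω) (ε : ℝ) (hε : 0 < ε) (hbdd : ∀ x, ε ≤ ω x)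
    (n₀ : ℝ) (hn₀ : ∀ k, ω (s k) ≤ n₀) :
    ¬ ZeroCluster (fun a b : S => ω (a * b) / (ω a * ω b)) :=
  triangle_disjoint_not_zeroCluster_general s hs n m hn hm ω hω ε hε hbdd n₀ hn₀
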